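/- Lemma 2.2 (matrix inequality for the p-Laplacian symbol). Let n ≥ 1, p > 1. Let ξ̄_x, ξ̄_y ∈ ℝⁿ \ {0} with unit vectors ξ̂_x = ξ̄_x/|ξ̄_x| and ξ̂_y = ξ̄_y/|ξ̄_y|. Let (ξ̂_y, ν₁, …, ν_{n−1}) and (ξ̂_x, ν̃₁, …, ν̃_{n−1}) be orthonormal bases of ℝⁿ. Let X, Y be real symmetric n×n matrices and let D be a real symmetric 2n×2n matrix such that the block-diagonal matrix with blocks X and −Y is ≤ D (i.e. D minus that block matrix is positive semidefinite). Write M_x for the upper-left n×n block of D, M_y for the lower-right n×n block of D, and for i = 1,…,n−1 let ζ_i ∈ ℝ^{2n} be the concatenation (ν̃_i, ν_i). Then F(ξ̄_x, X) − F(−ξ̄_y, Y) ≤ (p−1)(|ξ̄_x|^{p−4}⟨M_x ξ̄_x, ξ̄_x⟩ + |ξ̄_y|^{p−4}⟨M_y ξ̄_y, ξ̄_y⟩) + (|ξ̄_x|^{p−2} + |ξ̄_y|^{p−2}) Σ_{i=1}^{n−1} max(⟨D ζ_i, ζ_i⟩, 0) + | |ξ̄_x|^{p−2} − |ξ̄_y|^{p−2}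 | Σ_{i=1}^{n−1} ( |⟨M_x ν̃_i, ν̃_i⟩| + |⟨M_y ν_i, ν_i⟩| ). -/

import Mathlib

open scoped RealInnerProductSpace

noncomputable section

/-- Quadratic form `⟨M v, v⟩`. -/
def quadForm {ι : Type*} [Fintype ι] (M : Matrix ι ι ℝ) (v : ι → ℝ) : ℝ :=
  ∑ i, M.mulVec v i * v i

/-- The non-variational symbol of the `p`-Laplacian:
`F(ξ, X) = |ξ|^{p-2} tr X + (p-2)|ξ|^{p-4} ⟨Xξ, ξ⟩`. -/
def Fsym (n : ℕ) (p : ℝ) (ξ : EuclideanSpace ℝ (Fin n)) (X : Matrix (Fin n) (Fin n) ℝ) : ℝ :=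
  ‖ξ‖ ^ (p - 2) * X.trace + (p - 2) * ‖ξ‖ ^ (p - 4) * quadForm X (fun i => ξ i)

/-!
Completing `ξ / |ξ|` to an orthonormal basis `(ξ / |ξ|, ν₁, …, ν_{n-1})` splits the trace, so
`F(ξ, X) = (p - 1) |ξ|^{p-4} ⟨X ξ, ξ⟩ + |ξ|^{p-2} ∑ ⟨X νᵢ, νᵢ⟩`, and `F(-ξ, X) = F(ξ, X)`.
Testing `D - diag(X, -Y) ≥ 0` against `(u, 0)`, `(0, w)` and `ζᵢ = (ν̃ᵢ, νᵢ)` gives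
`⟨X u, u⟩ ≤ ⟨M_x u, u⟩`, `-⟨Y w, w⟩ ≤ ⟨M_y w, w⟩` and `⟨X ν̃ᵢ, ν̃ᵢ⟩ - ⟨Y νᵢ, νᵢ⟩ ≤ ⟨D ζᵢ, ζᵢ⟩`.
This bounds the normal terms at once; each tangential term `a s - b t` is
`min(a, b) (s - t)` plus `|a - b|` times `s` or `-t`.
-/

open Matrix

section QuadForm

variable {ι κ : Type*} [Fintype ι] [Fintype κ]

theorem sub_quadForm (M N : Matrix ι ι ℝ) (v : ι → ℝ) :
    quadForm (M - N) v = quadForm M v - quadForm N v := by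
  simp only [quadForm, sub_mulVec, Pi.sub_apply, sub_mul, Finset.sum_sub_distrib]

theorem quadForm_smul (M : Matrix ι ι ℝ) (c : ℝ) (v : ι → ℝ) :
    quadForm M (c • v) = c ^ 2 * quadForm M v := by
  simp only [quadForm, mulVec_smul, Pi.smul_apply, smul_eq_mul, Finset.mul_sum]
  exact Finset.sum_congr rfl fun _ _ => by ring

theorem quadForm_neg (M : Matrix ι ι ℝ) (v : ι → ℝ) : quadForm M (-v) = quadForm M v := by
  simpa using quadForm_smul M (-1) v

theorem neg_quadForm (M : Matrix ι ι ℝ) (v : ι → ℝ) : quadForm (-M) v = -quadForm M v := by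
  simp only [quadForm, neg_mulVec, Pi.neg_apply, neg_mul, Finset.sum_neg_distrib]

theorem quadForm_zero (M : Matrix ι ι ℝ) : quadForm M 0 = 0 := by
  simp [quadForm]

theorem Matrix.PosSemidef.quadForm_nonneg {M : Matrix ι ι ℝ} (hM : M.PosSemidef) (v : ι → ℝ) :
    0 ≤ quadForm M v := by
  simpa [quadForm, dotProduct, mul_comm] using hM.dotProduct_mulVec_nonneg v

theorem quadForm_sumElim_zero (M : Matrix (ι ⊕ κ) (ι ⊕ κ) ℝ) (u : ι → ℝ) :
    quadForm M (Sum.elim u 0) = quadForm M.toBlocks₁₁ u := by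
  simp [quadForm, mulVec, dotProduct, Fintype.sum_sum_type, toBlocks₁₁]

theorem quadForm_zero_sumElim (M : Matrix (ι ⊕ κ) (ι ⊕ κ) ℝ) (w : κ → ℝ) :
    quadForm M (Sum.elim 0 w) = quadForm M.toBlocks₂₂ w := by
  simp [quadForm, mulVec, dotProduct, Fintype.sum_sum_type, toBlocks₂₂]

theorem quadForm_fromBlocks_zero_zero (X : Matrix ι ι ℝ) (Y : Matrix κ κ ℝ)
    (u : ι → ℝ) (w : κ → ℝ) :
    quadForm (fromBlocks X 0 0 Y) (Sum.elim u w) = quadForm X u + quadForm Y w := by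
  simp [quadForm, mulVec, dotProduct, Fintype.sum_sum_type]

end QuadForm

theorem quadForm_sub_le_of_posSemidef {ι κ : Type*} [Fintype ι] [Fintype κ]
    {X : Matrix ι ι ℝ} {Y : Matrix κ κ ℝ} {D : Matrix (ι ⊕ κ) (ι ⊕ κ) ℝ}
    (hD : (D - fromBlocks X 0 0 (-Y)).PosSemidef)
    (u : ι → ℝ) (w : κ → ℝ) :
    quadForm X u - quadForm Y w ≤ quadForm D (Sum.elim u w) := by
  have := hD.quadForm_nonneg (Sum.elim u w)
  rw [sub_quadForm, quadForm_fromBlocks_zero_zero, neg_quadForm] at this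
  linarith

section Trace

variable {ι : Type*} [Fintype ι] [DecidableEq ι]

theorem quadForm_eq_inner_toEuclideanLin (X : Matrix ι ι ℝ) (v : EuclideanSpace ℝ ι) :
    quadForm X v = ⟪v, toEuclideanLin X v⟫ := by
  simp [quadForm, PiLp.inner_apply]

theorem trace_eq_sum_quadForm_of_orthonormal (X : Matrix ι ι ℝ) {e : ι → EuclideanSpace ℝ ι}
    (he : Orthonormal ℝ e) : X.trace = ∑ i, quadForm X (e i) := by
  let b := OrthonormalBasis.mk he
    (he.linearIndependent.span_eq_top_of_card_eq_finrank' (by simp)).ge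
  have := LinearMap.trace_eq_sum_inner (toEuclideanLin X) b
  simp only [b, OrthonormalBasis.coe_mk] at this
  simp only [quadForm_eq_inner_toEuclideanLin, ← this]
  rw [toEuclideanLin_eq_toLin_orthonormal,
    LinearMap.trace_eq_matrix_trace ℝ (EuclideanSpace.basisFun ι ℝ).toBasis,
    LinearMap.toMatrix_toLin]

end Trace

theorem trace_eq_of_orthonormal_cons {m : ℕ} (X : Matrix (Fin (m + 1)) (Fin (m + 1)) ℝ)
    (ξ : EuclideanSpace ℝ (Fin (m + 1))) (ν : Fin m → EuclideanSpace ℝ (Fin (m + 1)))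
    (h : Orthonormal ℝ (Fin.cons (‖ξ‖⁻¹ • ξ) ν : Fin (m + 1) → EuclideanSpace ℝ (Fin (m + 1)))) :
    X.trace = ‖ξ‖⁻¹ ^ 2 * quadForm X ξ + ∑ i, quadForm X (ν i) := by
  rw [trace_eq_sum_quadForm_of_orthonormal X h, Fin.sum_univ_succ, Fin.cons_zero,
    WithLp.ofLp_smul, quadForm_smul]
  simp only [Fin.cons_succ]

theorem Fsym_neg (n : ℕ) (p : ℝ) (ξ : EuclideanSpace ℝ (Fin n)) (X : Matrix (Fin n) (Fin n) ℝ) :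
    Fsym n p (-ξ) X = Fsym n p ξ X := by
  simp only [Fsym, norm_neg]
  rw [show (fun i => (-ξ) i) = -⇑ξ from rfl, quadForm_neg]

theorem Fsym_eq_of_orthonormal_cons {m : ℕ} (p : ℝ) {ξ : EuclideanSpace ℝ (Fin (m + 1))}
    (hξ : ξ ≠ 0) (ν : Fin m → EuclideanSpace ℝ (Fin (m + 1)))
    (h : Orthonormal ℝ (Fin.cons (‖ξ‖⁻¹ • ξ) ν : Fin (m + 1) → EuclideanSpace ℝ (Fin (m + 1))))
    (X : Matrix (Fin (m + 1)) (Fin (m + 1)) ℝ) :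
    Fsym (m + 1) p ξ X
      = (p - 1) * ‖ξ‖ ^ (p - 4) * quadForm X ξ + ‖ξ‖ ^ (p - 2) * ∑ i, quadForm X (ν i) := by
  have hr : 0 < ‖ξ‖ := norm_pos_iff.mpr hξ
  have hpow : ‖ξ‖ ^ (p - 2) * ‖ξ‖⁻¹ ^ 2 = ‖ξ‖ ^ (p - 4) := by
    rw [inv_pow, ← Real.rpow_natCast, ← Real.rpow_neg hr.le, ← Real.rpow_add hr]
    congr 1
    push_cast
    ring
  rw [Fsym, trace_eq_of_orthonormal_cons X ξ ν h, mul_add, ← mul_assoc, hpow]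
  ring

theorem mul_sub_mul_le_of_sub_le {a b s t d x y : ℝ} (ha : 0 ≤ a) (hb : 0 ≤ b)
    (hd : s - t ≤ d) (hx : s ≤ x) (hy : -t ≤ y) :
    a * s - b * t ≤ (a + b) * max d 0 + |a - b| * (|x| + |y|) := by
  have hd_max : s - t ≤ max d 0 := hd.trans (le_max_left d 0)
  have hmax : 0 ≤ max d 0 := le_max_right d 0
  rcases le_total a b with hab | hab
  · rw [abs_sub_comm, abs_of_nonneg (sub_nonneg.mpr hab)]
    have := mul_le_mul_of_nonneg_left (hy.trans (le_abs_self y)) (sub_nonneg.mpr hab)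
    linarith [mul_le_mul_of_nonneg_left hd_max ha, mul_nonneg hb hmax,
      mul_nonneg (sub_nonneg.mpr hab) (abs_nonneg x)]
  · rw [abs_of_nonneg (sub_nonneg.mpr hab)]
    have := mul_le_mul_of_nonneg_left (hx.trans (le_abs_self x)) (sub_nonneg.mpr hab)
    linarith [mul_le_mul_of_nonneg_left hd_max hb, mul_nonneg ha hmax,
      mul_nonneg (sub_nonneg.mpr hab) (abs_nonneg y)]

theorem matrix_inequality_p_laplacian_symbol_general
    (m : ℕ) (p : ℝ) (hp : 1 < p)
    (ξx ξy : EuclideanSpace ℝ (Fin (m + 1))) (hξx : ξx ≠ 0) (hξy : ξy ≠ 0)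
    (ν tildeν : Fin m → EuclideanSpace ℝ (Fin (m + 1)))
    (hONy : Orthonormal ℝ
      (Fin.cons (‖ξy‖⁻¹ • ξy) ν : Fin (m + 1) → EuclideanSpace ℝ (Fin (m + 1))))
    (hONx : Orthonormal ℝ
      (Fin.cons (‖ξx‖⁻¹ • ξx) tildeν : Fin (m + 1) → EuclideanSpace ℝ (Fin (m + 1))))
    (X Y : Matrix (Fin (m + 1)) (Fin (m + 1)) ℝ)
    (D : Matrix (Fin (m + 1) ⊕ Fin (m + 1)) (Fin (m + 1) ⊕ Fin (m + 1)) ℝ)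
    (hpsd : (D - Matrix.fromBlocks X 0 0 (-Y)).PosSemidef) :
    Fsym (m + 1) p ξx X - Fsym (m + 1) p (-ξy) Y ≤
      (p - 1) * (‖ξx‖ ^ (p - 4) * quadForm D.toBlocks₁₁ (fun j => ξx j)
          + ‖ξy‖ ^ (p - 4) * quadForm D.toBlocks₂₂ (fun j => ξy j))
      + (‖ξx‖ ^ (p - 2) + ‖ξy‖ ^ (p - 2)) *
          ∑ i : Fin m, max (quadForm D (Sum.elim (fun j => tildeν i j) (fun j => ν i j))) 0
      + |‖ξx‖ ^ (p - 2) - ‖ξy‖ ^ (p - 2)| *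
          ∑ i : Fin m, (|quadForm D.toBlocks₁₁ (fun j => tildeν i j)|
            + |quadForm D.toBlocks₂₂ (fun j => ν i j)|) := by
  have hX u : quadForm X u ≤ quadForm D.toBlocks₁₁ u := by
    simpa [quadForm_zero, quadForm_sumElim_zero] using quadForm_sub_le_of_posSemidef hpsd u 0
  have hY w : -quadForm Y w ≤ quadForm D.toBlocks₂₂ w := by
    simpa [quadForm_zero, quadForm_zero_sumElim] using quadForm_sub_le_of_posSemidef hpsd 0 w
  have hnormal : (p - 1) * (‖ξx‖ ^ (p - 4) * quadForm X ξx - ‖ξy‖ ^ (p - 4) * quadForm Y ξy)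
      ≤ (p - 1) * (‖ξx‖ ^ (p - 4) * quadForm D.toBlocks₁₁ ξx
          + ‖ξy‖ ^ (p - 4) * quadForm D.toBlocks₂₂ ξy) := by
    refine mul_le_mul_of_nonneg_left ?_ (sub_nonneg.mpr hp.le)
    rw [sub_eq_add_neg, ← mul_neg]
    exact add_le_add (mul_le_mul_of_nonneg_left (hX ξx) (by positivity))
      (mul_le_mul_of_nonneg_left (hY ξy) (by positivity))
  have htangential : ‖ξx‖ ^ (p - 2) * ∑ i, quadForm X (tildeν i)
        - ‖ξy‖ ^ (p - 2) * ∑ i, quadForm Y (ν i)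
      ≤ (‖ξx‖ ^ (p - 2) + ‖ξy‖ ^ (p - 2)) *
          ∑ i : Fin m, max (quadForm D (Sum.elim (tildeν i) (ν i))) 0
        + |‖ξx‖ ^ (p - 2) - ‖ξy‖ ^ (p - 2)| *
          ∑ i : Fin m, (|quadForm D.toBlocks₁₁ (tildeν i)| + |quadForm D.toBlocks₂₂ (ν i)|) := by
    simp only [Finset.mul_sum, ← Finset.sum_sub_distrib, ← Finset.sum_add_distrib]
    exact Finset.sum_le_sum fun i _ => mul_sub_mul_le_of_sub_le (by positivity) (by positivity)
      (quadForm_sub_le_of_posSemidef hpsd _ _) (hX _) (hY _)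
  rw [Fsym_neg, Fsym_eq_of_orthonormal_cons p hξx tildeν hONx X,
    Fsym_eq_of_orthonormal_cons p hξy ν hONy Y]
  linarith

/-- **Lemma 2.2** (matrix inequality for the `p`-Laplacian symbol). The dimension is
`n = m + 1 ≥ 1`; `(ξ̂_y, ν₁, …, ν_{n−1})` and `(ξ̂_x, ν̃₁, …, ν̃_{n−1})` are orthonormal
bases; `Mx`, `My` are the diagonal blocks of `D` and `ζ i` is the concatenation of
`ν̃ i` and `ν i`. -/
theorem matrix_inequality_p_laplacian_symbol
    (m : ℕ) (p : ℝ) (hp : 1 < p)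
    (ξx ξy : EuclideanSpace ℝ (Fin (m + 1))) (hξx : ξx ≠ 0) (hξy : ξy ≠ 0)
    (ν tildeν : Fin m → EuclideanSpace ℝ (Fin (m + 1)))
    (hONy : Orthonormal ℝ
      (Fin.cons (‖ξy‖⁻¹ • ξy) ν : Fin (m + 1) → EuclideanSpace ℝ (Fin (m + 1))))
    (hspany : Submodule.span ℝ
      (Set.range (Fin.cons (‖ξy‖⁻¹ • ξy) ν : Fin (m + 1) → EuclideanSpace ℝ (Fin (m + 1))))
        = ⊤)
    (hONx : Orthonormal ℝ
      (Fin.cons (‖ξx‖⁻¹ • ξx) tildeν : Fin (m + 1) → EuclideanSpace ℝ (Fin (m + 1))))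
    (hspanx : Submodule.span ℝ
      (Set.range (Fin.cons (‖ξx‖⁻¹ • ξx) tildeν : Fin (m + 1) → EuclideanSpace ℝ (Fin (m + 1))))
        = ⊤)
    (X Y : Matrix (Fin (m + 1)) (Fin (m + 1)) ℝ) (hX : X.IsSymm) (hY : Y.IsSymm)
    (D : Matrix (Fin (m + 1) ⊕ Fin (m + 1)) (Fin (m + 1) ⊕ Fin (m + 1)) ℝ) (hD : D.IsSymm)
    (hpsd : (D - Matrix.fromBlocks X 0 0 (-Y)).PosSemidef) :
    Fsym (m + 1) p ξx X - Fsym (m + 1) p (-ξy) Y ≤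
      (p - 1) * (‖ξx‖ ^ (p - 4) * quadForm D.toBlocks₁₁ (fun j => ξx j)
          + ‖ξy‖ ^ (p - 4) * quadForm D.toBlocks₂₂ (fun j => ξy j))
      + (‖ξx‖ ^ (p - 2) + ‖ξy‖ ^ (p - 2)) *
          ∑ i : Fin m, max (quadForm D (Sum.elim (fun j => tildeν i j) (fun j => ν i j))) 0
      + |‖ξx‖ ^ (p - 2) - ‖ξy‖ ^ (p - 2)| *
          ∑ i : Fin m, (|quadForm D.toBlocks₁₁ (fun j => tildeν i j)|
            + |quadForm D.toBlocks₂₂ (fun j => ν i j)|) :=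
  matrix_inequality_p_laplacian_symbol_general m p hp ξx ξy hξx hξy ν tildeν hONy hONx X Y D hpsd
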